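/- arXiv:1905.04023 — 6 statements merged into one kernel-verified Lean document; each statement's English description precedes it below -/
import Mathlib

section
/- The cubic polynomial x^3 - a x + b with real coefficients has three distinct roots in the open interval (-2, 2) if and only if 0 < a < 4 and max(2a - 8, -2a√a/(3√3)) < b < min(8 - 2a, 2a√a/(3√3)). -/
set_option maxHeartbeats 1000000


/-- x^3 - a x + b has three distinct roots in (-2,2) iff
`0 < a < 4` and `max(2a-8, -2a√a/(3√3)) < b < min(8-2a, 2a√a/(3√3))`. -/
theorem cubic_three_roots_in_Ioo (a b : ℝ) :
    (∃ x y z : ℝ, x ≠ y ∧ x ≠ z ∧ y ≠ z ∧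
      x ∈ Set.Ioo (-2 : ℝ) 2 ∧ y ∈ Set.Ioo (-2 : ℝ) 2 ∧ z ∈ Set.Ioo (-2 : ℝ) 2 ∧
      x ^ 3 - a * x + b = 0 ∧ y ^ 3 - a * y + b = 0 ∧ z ^ 3 - a * z + b = 0) ↔
    (0 < a ∧ a < 4 ∧
      max (2 * a - 8) (-(2 * a * Real.sqrt a) / (3 * Real.sqrt 3)) < b ∧
      b < min (8 - 2 * a) (2 * a * Real.sqrt a / (3 * Real.sqrt 3))) := by
  have h3 : (0:ℝ) < Real.sqrt 3 := Real.sqrt_pos.mpr (by norm_num)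
  have h3sq : Real.sqrt 3 ^ 2 = 3 := Real.sq_sqrt (by norm_num)
  constructor
  · rintro ⟨x, y, z, hxy, hxz, hyz, ⟨hx1, hx2⟩, ⟨hy1, hy2⟩, ⟨hz1, hz2⟩, hx, hy, hz⟩
    -- Vieta-type relations
    have exy : a = x^2 + x*y + y^2 := by
      have h : (x - y) * (x^2 + x*y + y^2 - a) = 0 := by nlinarith [hx, hy]
      rcases mul_eq_zero.mp h with h | h
      · exact absurd (sub_eq_zero.mp h) hxy
      · linarith
    have exz : a = x^2 + x*z + z^2 := by
      have h : (x - z) * (x^2 + x*z + z^2 - a) = 0 := by nlinarith [hx, hz]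
      rcases mul_eq_zero.mp h with h | h
      · exact absurd (sub_eq_zero.mp h) hxz
      · linarith
    have esum : z = -x - y := by
      have h : (y - z) * (x + y + z) = 0 := by nlinarith [exy, exz]
      rcases mul_eq_zero.mp h with h | h
      · exact absurd (sub_eq_zero.mp h) hyz
      · linarith
    have eb : b = x^2*y + x*y^2 := by nlinarith [hx, exy]
    subst esum
    -- positivity of a
    have hxysq : (0:ℝ) < (x - y)^2 :=
      lt_of_le_of_ne (sq_nonneg _) (Ne.symm (pow_ne_zero 2 (sub_ne_zero.mpr hxy)))
    have ha0 : 0 < a := by nlinarith [sq_nonneg (x + y)]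
    -- endpoint conditions
    have hblo : 2 * a - 8 < b := by nlinarith [mul_pos (mul_pos (by linarith : (0:ℝ) < 2 - x) (by linarith : (0:ℝ) < 2 - y)) (by linarith : (0:ℝ) < 2 - (-x - y))]
    have hbhi : b < 8 - 2 * a := by nlinarith [mul_pos (mul_pos (by linarith : (0:ℝ) < x + 2) (by linarith : (0:ℝ) < y + 2)) (by linarith : (0:ℝ) < (-x - y) + 2)]
    have ha4 : a < 4 := by linarith
    -- discriminant
    have hd : 27 * b^2 < 4 * a^3 := by
      have key : 4*a^3 - 27*b^2 = ((x - y) * (x - (-x - y)) * (y - (-x - y)))^2 := by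
        rw [exy, eb]; ring
      have hne : (x - y) * (x - (-x - y)) * (y - (-x - y)) ≠ 0 :=
        mul_ne_zero (mul_ne_zero (sub_ne_zero.mpr hxy) (sub_ne_zero.mpr hxz)) (sub_ne_zero.mpr hyz)
      nlinarith [pow_pos (abs_pos.mpr hne) 2, sq_abs ((x - y) * (x - (-x - y)) * (y - (-x - y))), key]
    -- convert to the sqrt bound
    have hasq : Real.sqrt a ^ 2 = a := Real.sq_sqrt ha0.le
    have haspos : 0 < Real.sqrt a := Real.sqrt_pos.mpr ha0
    set M : ℝ := 2 * a * Real.sqrt a / (3 * Real.sqrt 3) with hM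
    have hMpos : 0 < M := by positivity
    have hMsq : M^2 = 4 * a^3 / 27 := by
      rw [hM, div_pow, show (2*a*Real.sqrt a)^2 = 4*a^2*(Real.sqrt a^2) by ring,
        show (3*Real.sqrt 3)^2 = 9*(Real.sqrt 3^2) by ring, hasq, h3sq]
      ring
    have hbM : |b| < M := by
      refine lt_of_pow_lt_pow_left₀ 2 hMpos.le ?_
      rw [sq_abs]; rw [hMsq]; linarith
    have hbM' := abs_lt.mp hbM
    refine ⟨ha0, ha4, ?_, ?_⟩
    · rw [max_lt_iff]
      constructor
      · exact hblo
      · have : -(2 * a * Real.sqrt a) / (3 * Real.sqrt 3) = -M := by rw [hM]; ring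
        rw [this]; linarith [hbM'.1]
    · rw [lt_min_iff]
      exact ⟨hbhi, hbM'.2⟩
  · rintro ⟨ha0, ha4, hb1, hb2⟩
    obtain ⟨hblo, hbloM⟩ := max_lt_iff.mp hb1
    obtain ⟨hbhi, hbhiM⟩ := lt_min_iff.mp hb2
    set M : ℝ := 2 * a * Real.sqrt a / (3 * Real.sqrt 3) with hM
    have hasq : Real.sqrt a ^ 2 = a := Real.sq_sqrt ha0.le
    have haspos : 0 < Real.sqrt a := Real.sqrt_pos.mpr ha0
    set c : ℝ := Real.sqrt (a / 3) with hc
    have hcpos : 0 < c := Real.sqrt_pos.mpr (by linarith)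
    have hcsq : c^2 = a / 3 := Real.sq_sqrt (by linarith)
    have hc2 : c < 2 := by nlinarith
    have hceq : c = Real.sqrt a / Real.sqrt 3 := by
      rw [hc, Real.sqrt_div ha0.le]
    have hMc : M = (2*a/3) * c := by rw [hM, hceq]; ring
    set f : ℝ → ℝ := fun t => t^3 - a * t + b with hf
    have hcont : Continuous f := by fun_prop
    have hfm2 : f (-2) < 0 := by simp only [hf]; norm_num; linarith
    have hf2 : 0 < f 2 := by simp only [hf]; norm_num; linarith
    have hfmc : 0 < f (-c) := by
      have : f (-c) = b + M := by
        simp only [hf]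
        rw [hMc]
        linear_combination (-c) * hcsq
      rw [this]
      have : -(2 * a * Real.sqrt a) / (3 * Real.sqrt 3) = -M := by rw [hM]; ring
      rw [this] at hbloM; linarith
    have hfc : f c < 0 := by
      have : f c = b - M := by
        simp only [hf]
        rw [hMc]
        linear_combination c * hcsq
      rw [this]; linarith
    -- three roots by IVT
    have hroot1 : ∃ x ∈ Set.Ioo (-2 : ℝ) (-c), f x = 0 := by
      have h := intermediate_value_Ioo (by linarith : (-2:ℝ) ≤ -c) hcont.continuousOn
      have h0 : (0:ℝ) ∈ Set.Ioo (f (-2)) (f (-c)) := ⟨hfm2, hfmc⟩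
      obtain ⟨x, hx, hfx⟩ := h h0
      exact ⟨x, hx, hfx⟩
    have hroot2 : ∃ x ∈ Set.Ioo (-c) c, f x = 0 := by
      have h := intermediate_value_Ioo' (by linarith : (-c:ℝ) ≤ c) hcont.continuousOn
      have h0 : (0:ℝ) ∈ Set.Ioo (f c) (f (-c)) := ⟨hfc, hfmc⟩
      obtain ⟨x, hx, hfx⟩ := h h0
      exact ⟨x, hx, hfx⟩
    have hroot3 : ∃ x ∈ Set.Ioo c 2, f x = 0 := by
      have h := intermediate_value_Ioo (by linarith : (c:ℝ) ≤ 2) hcont.continuousOn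
      have h0 : (0:ℝ) ∈ Set.Ioo (f c) (f 2) := ⟨hfc, hf2⟩
      obtain ⟨x, hx, hfx⟩ := h h0
      exact ⟨x, hx, hfx⟩
    obtain ⟨x, ⟨hx1, hx2⟩, hfx⟩ := hroot1
    obtain ⟨y, ⟨hy1, hy2⟩, hfy⟩ := hroot2
    obtain ⟨z, ⟨hz1, hz2⟩, hfz⟩ := hroot3
    refine ⟨x, y, z, by linarith, by linarith, by linarith,
      ⟨by linarith, by linarith⟩, ⟨by linarith, by linarith⟩, ⟨by linarith, by linarith⟩,
      hfx, hfy, hfz⟩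
end

section
/- The cubic polynomial x^3 - a x + b with real coefficients has two distinct roots in the open interval (-2, 2) and one root in (2, ∞) if and only if 3 < a < 12 and -2a√a/(3√3) < b < -|2a - 8|. -/
set_option maxHeartbeats 1000000


private lemma sqrt_lb (a b s t : ℝ) (hs2 : s ^ 2 = a) (ht2 : t ^ 2 = 3)
    (hs0 : 0 < s) (ht0 : 0 < t) (hb0 : b < 0) (ha0 : 0 < a)
    (hd : 0 < 4 * a ^ 3 - 27 * b ^ 2) : -(2 * a * s) < b * (3 * t) := by
  have key1 : (2 * a * s) ^ 2 = 4 * a ^ 3 := by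
    rw [show (2 * a * s) ^ 2 = 4 * a ^ 2 * s ^ 2 by ring, hs2]; ring
  have key2 : (3 * t * b) ^ 2 = 27 * b ^ 2 := by
    rw [show (3 * t * b) ^ 2 = 9 * t ^ 2 * b ^ 2 by ring, ht2]; ring
  have huv : 0 < 2 * a * s - 3 * t * b := by
    have h1 : 0 < 2 * a * s := by positivity
    have h2 : 0 < (3 * t) * (-b) := mul_pos (by positivity) (by linarith)
    linarith
  have hprod : 0 < (2 * a * s + 3 * t * b) * (2 * a * s - 3 * t * b) := by
    rw [show (2 * a * s + 3 * t * b) * (2 * a * s - 3 * t * b)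
        = (2 * a * s) ^ 2 - (3 * t * b) ^ 2 by ring, key1, key2]
    linarith
  nlinarith [hprod, huv]

private lemma a_gt_three (a b s t : ℝ) (hs2 : s ^ 2 = a) (ht2 : t ^ 2 = 3)
    (hs0 : 0 < s) (ht0 : 0 < t) (ha0 : 0 < a)
    (hbu1 : b < 2 * a - 8) (hlow : -(2 * a * s) < b * (3 * t)) : 3 < a := by
  by_contra hcon
  push_neg at hcon
  have h1 : 3 * t * (8 - 2 * a) < 2 * a * s := by
    have := mul_lt_mul_of_pos_right hbu1 (show (0:ℝ) < 3 * t by positivity)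
    nlinarith
  have h1l : 0 < 3 * t * (8 - 2 * a) := by nlinarith [ht0]
  have h2 : (3 * t * (8 - 2 * a)) ^ 2 < (2 * a * s) ^ 2 :=
    pow_lt_pow_left₀ h1 h1l.le (by norm_num)
  have e1 : (3 * t * (8 - 2 * a)) ^ 2 = 27 * (8 - 2 * a) ^ 2 := by
    rw [show (3 * t * (8 - 2 * a)) ^ 2 = 9 * t ^ 2 * (8 - 2 * a) ^ 2 by ring, ht2]; ring
  have e2 : (2 * a * s) ^ 2 = 4 * a ^ 3 := by
    rw [show (2 * a * s) ^ 2 = 4 * a ^ 2 * s ^ 2 by ring, hs2]; ring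
  nlinarith [mul_nonneg (show (0:ℝ) ≤ 3 - a by linarith) (sq_nonneg (a - 12))]

private lemma cubic_fwd (a b x y z : ℝ) (hxy : x ≠ y)
    (hx1 : -2 < x) (hx2 : x < 2) (hy1 : -2 < y) (hy2 : y < 2) (hz : 2 < z)
    (ex : x ^ 3 - a * x + b = 0) (ey : y ^ 3 - a * y + b = 0)
    (ez : z ^ 3 - a * z + b = 0) :
    3 < a ∧ a < 12 ∧
      -(2 * a * Real.sqrt a) / (3 * Real.sqrt 3) < b ∧ b < -|2 * a - 8| := by
  have hxy' : x - y ≠ 0 := sub_ne_zero.mpr hxy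
  have hxz' : x - z ≠ 0 := sub_ne_zero.mpr (ne_of_lt (lt_trans hx2 hz))
  have hyz' : y - z ≠ 0 := sub_ne_zero.mpr (ne_of_lt (lt_trans hy2 hz))
  have h1 : (x - y) * (x ^ 2 + x * y + y ^ 2 - a) = 0 := by linear_combination ex - ey
  have h2 : (x - z) * (x ^ 2 + x * z + z ^ 2 - a) = 0 := by linear_combination ex - ez
  have h3 : (y - z) * (y ^ 2 + y * z + z ^ 2 - a) = 0 := by linear_combination ey - ez
  have ha : a = x ^ 2 + x * y + y ^ 2 := by
    rcases mul_eq_zero.mp h1 with h | h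
    · exact absurd h hxy'
    · linarith
  have ha2 : a = x ^ 2 + x * z + z ^ 2 := by
    rcases mul_eq_zero.mp h2 with h | h
    · exact absurd h hxz'
    · linarith
  have ha3 : a = y ^ 2 + y * z + z ^ 2 := by
    rcases mul_eq_zero.mp h3 with h | h
    · exact absurd h hyz'
    · linarith
  have hsum : x + y + z = 0 := by
    have h4 : (x - y) * (x + y + z) = 0 := by linear_combination ha3 - ha2
    rcases mul_eq_zero.mp h4 with h | h
    · exact absurd h hxy'
    · linarith
  have hzeq : z = -(x + y) := by linarith
  have hb : b = x ^ 2 * y + x * y ^ 2 := by linear_combination x * ha + ex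
  -- b upper bounds
  have hbu1 : b < 2 * a - 8 := by
    nlinarith [mul_pos (show (0:ℝ) < 2 - x by linarith) (show (0:ℝ) < 2 - y by linarith),
      show x + y + 2 < 0 by linarith]
  have hbu2 : b < 8 - 2 * a := by
    nlinarith [mul_pos (show (0:ℝ) < x + 2 by linarith) (show (0:ℝ) < y + 2 by linarith),
      show 0 < z + 2 by linarith]
  have habs : b < -|2 * a - 8| := by
    rcases abs_cases (2 * a - 8) with ⟨h, _⟩ | ⟨h, _⟩ <;> rw [h] <;> linarith
  -- a < 12
  have ha12 : a < 12 := by nlinarith [sq_nonneg (x + y), sq_nonneg (x - y)]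
  -- a > 0
  have hxy2 : 0 < (x - y) ^ 2 :=
    lt_of_le_of_ne (sq_nonneg _) (Ne.symm (pow_ne_zero 2 hxy'))
  have ha0 : 0 < a := by nlinarith [sq_nonneg (x + y)]
  -- discriminant
  have hdisc : 4 * a ^ 3 - 27 * b ^ 2 = ((x - y) * (2 * x + y) * (x + 2 * y)) ^ 2 := by
    rw [ha, hb]; ring
  have hne : (x - y) * (2 * x + y) * (x + 2 * y) ≠ 0 := by
    apply mul_ne_zero (mul_ne_zero hxy' _)
    · intro h; apply hyz'; linarith
    · intro h; apply hxz'; linarith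
  have hdiscpos : 0 < 4 * a ^ 3 - 27 * b ^ 2 := by
    rw [hdisc]
    exact lt_of_le_of_ne (sq_nonneg _) (Ne.symm (pow_ne_zero 2 hne))
  set s := Real.sqrt a with hsdef
  set t := Real.sqrt 3 with htdef
  have hs2 : s ^ 2 = a := Real.sq_sqrt ha0.le
  have ht2 : t ^ 2 = 3 := Real.sq_sqrt (by norm_num)
  have hs0 : 0 < s := Real.sqrt_pos.mpr ha0
  have ht0 : 0 < t := Real.sqrt_pos.mpr (by norm_num)
  have hb0 : b < 0 := lt_of_lt_of_le habs (neg_nonpos.mpr (abs_nonneg _))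
  have hlow : -(2 * a * s) < b * (3 * t) :=
    sqrt_lb a b s t hs2 ht2 hs0 ht0 hb0 ha0 hdiscpos
  have ha3 : 3 < a := a_gt_three a b s t hs2 ht2 hs0 ht0 ha0 hbu1 hlow
  refine ⟨ha3, ha12, ?_, habs⟩
  rw [div_lt_iff₀ (by positivity : (0:ℝ) < 3 * t)]
  linarith [hlow]

private lemma cubic_bwd (a b : ℝ) (ha3 : 3 < a) (ha12 : a < 12)
    (hbl : -(2 * a * Real.sqrt a) / (3 * Real.sqrt 3) < b) (hbu : b < -|2 * a - 8|) :
    ∃ x y z : ℝ, x ≠ y ∧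
      x ∈ Set.Ioo (-2 : ℝ) 2 ∧ y ∈ Set.Ioo (-2 : ℝ) 2 ∧ z ∈ Set.Ioi (2 : ℝ) ∧
      x ^ 3 - a * x + b = 0 ∧ y ^ 3 - a * y + b = 0 ∧ z ^ 3 - a * z + b = 0 := by
  have ha0 : 0 < a := by linarith
  set s := Real.sqrt a with hsdef
  set t := Real.sqrt 3 with htdef
  have hs2 : s ^ 2 = a := Real.sq_sqrt ha0.le
  have ht2 : t ^ 2 = 3 := Real.sq_sqrt (by norm_num)
  have hs0 : 0 < s := Real.sqrt_pos.mpr ha0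
  have ht0 : 0 < t := Real.sqrt_pos.mpr (by norm_num)
  have hbu1 : b < 8 - 2 * a := by
    have := le_abs_self (2 * a - 8); linarith
  have hbu2 : b < 2 * a - 8 := by
    have := neg_abs_le (2 * a - 8); linarith
  set c := s / t with hcdef
  have hc0 : 0 < c := div_pos hs0 ht0
  have hc2 : c < 2 := by
    rw [hcdef, div_lt_iff₀ ht0]
    nlinarith [hs2, ht2]
  have h3t : (0:ℝ) < 3 * t := by positivity
  have hbl' : 0 < 2 * a * s / (3 * t) + b := by
    rw [div_lt_iff₀ h3t] at hbl
    have heq : 2 * a * s / (3 * t) + b = (2 * a * s + b * (3 * t)) / (3 * t) := by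
      field_simp
    rw [heq, lt_div_iff₀ h3t]
    linarith
  set f : ℝ → ℝ := fun u => u ^ 3 - a * u + b with hfdef
  have hf : Continuous f := by
    apply Continuous.add
    · exact (continuous_pow 3).sub (continuous_const.mul continuous_id)
    · exact continuous_const
  have hfneg2 : f (-2) < 0 := by
    show (-2:ℝ) ^ 3 - a * (-2) + b < 0
    norm_num; linarith
  have hf2 : f 2 < 0 := by
    show (2:ℝ) ^ 3 - a * 2 + b < 0
    norm_num; linarith
  have hfc : 0 < f (-c) := by
    have hval : f (-c) = 2 * a * s / (3 * t) + b := by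
      show (-c) ^ 3 - a * (-c) + b = 2 * a * s / (3 * t) + b
      rw [hcdef]
      field_simp
      linear_combination (-3 * s) * hs2 + (a * s) * ht2
    rw [hval]; exact hbl'
  set N : ℝ := a + |b| + 3 with hNdef
  have hN2 : 2 < N := by
    have := abs_nonneg b; rw [hNdef]; linarith
  have hNpos : (0:ℝ) < N := by linarith
  have h3 : a + 3 ≤ N := by rw [hNdef]; linarith [abs_nonneg b]
  have hb4 : a + 3 - N ≤ b := by
    have h5 : -|b| ≤ b := neg_abs_le b
    have h6 : |b| = N - a - 3 := by rw [hNdef]; ring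
    linarith
  have hfN : 0 < f N := by
    show 0 < N ^ 3 - a * N + b
    nlinarith [mul_pos hNpos (show (0:ℝ) < N ^ 2 - 2 * N by
        nlinarith [mul_pos hNpos (show (0:ℝ) < N - 2 by linarith)]),
      mul_nonneg hNpos.le (show (0:ℝ) ≤ 2 * N - 2 * a - 6 by linarith),
      mul_pos (show (0:ℝ) < a + 5 by linarith) hNpos, hb4]
  have hcc : ContinuousOn f (Set.Icc (-2 : ℝ) (-c)) := hf.continuousOn
  obtain ⟨x, hxm, hfx⟩ := intermediate_value_Ioo (by linarith : (-2:ℝ) ≤ -c)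
    hf.continuousOn (Set.mem_Ioo.mpr ⟨hfneg2, hfc⟩ : (0:ℝ) ∈ Set.Ioo (f (-2)) (f (-c)))
  obtain ⟨y, hym, hfy⟩ := intermediate_value_Ioo' (by linarith : (-c:ℝ) ≤ 2)
    hf.continuousOn (Set.mem_Ioo.mpr ⟨hf2, hfc⟩ : (0:ℝ) ∈ Set.Ioo (f 2) (f (-c)))
  obtain ⟨z, hzm, hfz⟩ := intermediate_value_Ioo (le_of_lt hN2)
    hf.continuousOn (Set.mem_Ioo.mpr ⟨hf2, hfN⟩ : (0:ℝ) ∈ Set.Ioo (f 2) (f N))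
  refine ⟨x, y, z, ne_of_lt (lt_trans hxm.2 hym.1),
    ⟨hxm.1, by linarith [hxm.2, hc0]⟩, ⟨by linarith [hym.1, hc2], hym.2⟩,
    hzm.1, hfx, hfy, hfz⟩

/-- x^3 - a x + b has two distinct roots in (-2,2) and one root in (2,∞) iff
`3 < a < 12` and `-2a√a/(3√3) < b < -|2a-8|`. -/
theorem cubic_two_roots_in_Ioo_one_gt_two (a b : ℝ) :
    (∃ x y z : ℝ, x ≠ y ∧
      x ∈ Set.Ioo (-2 : ℝ) 2 ∧ y ∈ Set.Ioo (-2 : ℝ) 2 ∧ z ∈ Set.Ioi (2 : ℝ) ∧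
      x ^ 3 - a * x + b = 0 ∧ y ^ 3 - a * y + b = 0 ∧ z ^ 3 - a * z + b = 0) ↔
    (3 < a ∧ a < 12 ∧
      -(2 * a * Real.sqrt a) / (3 * Real.sqrt 3) < b ∧ b < -|2 * a - 8|) := by
  constructor
  · rintro ⟨x, y, z, hxy, ⟨hx1, hx2⟩, ⟨hy1, hy2⟩, hz, ex, ey, ez⟩
    exact cubic_fwd a b x y z hxy hx1 hx2 hy1 hy2 hz ex ey ez
  · rintro ⟨ha3, ha12, hbl, hbu⟩
    exact cubic_bwd a b ha3 ha12 hbl hbu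
end

section
/- Let α > 1 be a Salem number of degree d = 2s ≥ 4 with conjugates α₁ = α, α₂ = 1/α, and α_{2j} = 1/α_{2j-1} = conjugate(α_{2j-1}) for j = 2, ..., s. If k₁α₁ + k₂α₂ + ⋯ + k_d α_d = γ for rational numbers k₁, ..., k_d and a totally real algebraic number γ, then k_{2j-1} = k_{2j} for each j = 1, ..., s. -/
open Polynomial

private lemma sum_range_two_mul {M : Type*} [AddCommMonoid M] (s : ℕ) (g : ℕ → M) :
    ∑ i ∈ Finset.range (2*s), g i = ∑ j ∈ Finset.range s, (g (2*j) + g (2*j+1)) := by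
  induction s with
  | zero => simp
  | succ n ih =>
    rw [Finset.sum_range_succ, ← ih, show 2*(n+1) = (2*n+1)+1 by ring,
      Finset.sum_range_succ, Finset.sum_range_succ, add_assoc]

private lemma sum_pair_split {M : Type*} [AddCommMonoid M] {s : ℕ} (f : Fin (2*s) → M) :
    ∑ i, f i = ∑ j : Fin s, (f ⟨2*j.1, by omega⟩ + f ⟨2*j.1+1, by omega⟩) := by
  classical
  let g : ℕ → M := fun n => if h : n < 2*s then f ⟨n, h⟩ else 0
  have h1 : ∑ i, f i = ∑ i : Fin (2*s), g i.1 := Finset.sum_congr rfl fun i _ => by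
    simp only [g, dif_pos i.isLt]
  rw [h1, Fin.sum_univ_eq_sum_range g (2*s), sum_range_two_mul s g,
    ← Fin.sum_univ_eq_sum_range (fun n => g (2*n) + g (2*n+1)) s]
  refine Finset.sum_congr rfl fun j _ => ?_
  have hj := j.isLt
  simp only [g, dif_pos (show 2*j.1 < 2*s by omega), dif_pos (show 2*j.1+1 < 2*s by omega)]

private lemma re_ratCast_mul_sub_conj (q : ℚ) (z : ℂ) :
    ((q:ℂ) * (z - (starRingEnd ℂ) z)).re = 0 := by
  simp [Complex.mul_re]


/-- A Salem number: a real algebraic integer `α > 1` whose other conjugates over ℚ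
all lie in the closed unit disc, with at least one conjugate on the unit circle. -/
def IsSalem (α : ℝ) : Prop :=
  1 < α ∧ IsIntegral ℤ α ∧
  (∀ z : ℂ, aeval z (minpoly ℚ α) = 0 → z ≠ (α : ℂ) → ‖z‖ ≤ 1) ∧
  (∃ z : ℂ, aeval z (minpoly ℚ α) = 0 ∧ ‖z‖ = 1)

/-- A totally real algebraic number: all its conjugates over ℚ are real. -/
def IsTotallyReal (γ : ℂ) : Prop :=
  IsAlgebraic ℚ γ ∧ ∀ z : ℂ, aeval z (minpoly ℚ γ) = 0 → z.im = 0

set_option maxHeartbeats 2000000 in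
/-- Theorem 1: if `α` is a Salem number of degree `2s ≥ 4` with
conjugates `a 0 = α`, `a 1 = 1/α`, and `a (2j+1) = 1/(a (2j)) = conj (a (2j))`
for `j = 1, …, s-1`, and `∑ k i • a i = γ` with `k i ∈ ℚ` and `γ` totally real,
then `k (2j) = k (2j+1)` for every `j`. -/
theorem salem_linear_relation_pairs (α : ℝ) (s : ℕ) (hs : 2 ≤ s)
    (hα : IsSalem α) (hdeg : (minpoly ℚ α).natDegree = 2 * s)
    (a : Fin (2 * s) → ℂ) (hinj : Function.Injective a)
    (hroots : ∀ i, aeval (a i) (minpoly ℚ α) = 0)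
    (h0 : a ⟨0, by omega⟩ = (α : ℂ))
    (h1 : a ⟨1, by omega⟩ = (α : ℂ)⁻¹)
    (hpair : ∀ j : Fin s, a ⟨2 * j.1 + 1, by have := j.isLt; omega⟩ =
      (a ⟨2 * j.1, by have := j.isLt; omega⟩)⁻¹)
    (hconj : ∀ j : Fin s, 1 ≤ j.1 →
      a ⟨2 * j.1 + 1, by have := j.isLt; omega⟩ =
        (starRingEnd ℂ) (a ⟨2 * j.1, by have := j.isLt; omega⟩))
    (k : Fin (2 * s) → ℚ) (γ : ℂ) (hγ : IsTotallyReal γ)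
    (hrel : ∑ i, (k i : ℂ) * a i = γ) :
    ∀ j : Fin s, k ⟨2 * j.1, by have := j.isLt; omega⟩ =
      k ⟨2 * j.1 + 1, by have := j.isLt; omega⟩ := by
  obtain ⟨hα1, hint, hle, z₀, hz₀root, hz₀abs⟩ := hα
  have hα0 : (0:ℝ) < α := lt_trans one_pos hα1
  set p := minpoly ℚ α with hp
  have hαint : IsIntegral ℚ α := IsIntegral.tower_top hint
  have hpirr : Irreducible p := minpoly.irreducible hαint
  have hpmonic : p.Monic := minpoly.monic hαint
  have hpne : p ≠ 0 := hpmonic.ne_zero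
  have hmin : ∀ z : ℂ, aeval z p = 0 → minpoly ℚ z = p :=
    fun z hz => (minpoly.eq_of_irreducible_of_monic hpirr hz hpmonic).symm
  have hαroot : aeval ((α:ℂ)) p = 0 := by
    have h : aeval ((algebraMap ℝ ℂ) α) p = algebraMap ℝ ℂ (aeval α p) :=
      aeval_algebraMap_apply ℂ α p
    rw [minpoly.aeval, map_zero] at h
    exact h
  have hratroot : ∀ q : ℚ, aeval ((q:ℂ)) p = 0 → False := by
    intro q hq
    have h1 : minpoly ℚ ((q:ℂ)) = p := hmin _ hq
    have h2 : minpoly ℚ ((q:ℂ)) = X - C q := by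
      have := minpoly.eq_X_sub_C ℂ q
      rwa [show (algebraMap ℚ ℂ) q = (q:ℂ) from eq_ratCast _ q] at this
    have : p.natDegree = 1 := by rw [← h1, h2, natDegree_X_sub_C]
    rw [hdeg] at this
    omega
  have hne0 : ∀ z : ℂ, aeval z p = 0 → z ≠ 0 := by
    intro z hz h0
    exact hratroot 0 (by rw [Rat.cast_zero]; exact h0 ▸ hz)
  have hsep : p.Separable := hpirr.separable
  have hsplits : (p.map (algebraMap ℚ ℂ)).Splits := IsAlgClosed.splits _
  have hcard : Fintype.card (p.rootSet ℂ) = 2 * s := by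
    rw [card_rootSet_eq_natDegree hsep hsplits, hdeg]
  have hmemroot : ∀ i, a i ∈ p.rootSet ℂ := fun i => by
    rw [mem_rootSet]; exact ⟨hpne, hroots i⟩
  have hsurj : ∀ z : ℂ, aeval z p = 0 → ∃ i, a i = z := by
    intro z hz
    let A : Fin (2*s) → p.rootSet ℂ := fun i => ⟨a i, hmemroot i⟩
    have hAinj : Function.Injective A := fun i j h => hinj (congrArg Subtype.val h)
    have hAbij : Function.Bijective A :=
      (Fintype.bijective_iff_injective_and_card A).2 ⟨hAinj, by simp [hcard]⟩
    obtain ⟨i, hi⟩ := hAbij.2 ⟨z, by rw [mem_rootSet]; exact ⟨hpne, hz⟩⟩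
    exact ⟨i, congrArg Subtype.val hi⟩
  -- inverse of any root is a root
  have hinv_root : ∀ z : ℂ, aeval z p = 0 → aeval z⁻¹ p = 0 := by
    intro z hz
    obtain ⟨i, rfl⟩ := hsurj z hz
    obtain ⟨j, hj | hj⟩ : ∃ j : Fin s, (i.1 = 2*j.1 ∨ i.1 = 2*j.1+1) := by
      refine ⟨⟨i.1/2, by have := i.isLt; omega⟩, ?_⟩
      show i.1 = 2*(i.1/2) ∨ i.1 = 2*(i.1/2)+1
      omega
    · have hi : i = ⟨2*j.1, by have := j.isLt; omega⟩ := Fin.ext hj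
      rw [hi, ← hpair j]
      exact hroots _
    · have hi : i = ⟨2*j.1+1, by have := j.isLt; omega⟩ := Fin.ext hj
      rw [hi, hpair j, inv_inv]
      exact hroots _
  have habs1 : ∀ z : ℂ, aeval z p = 0 → z ≠ (α:ℂ) → z ≠ ((α:ℂ))⁻¹ →
      ‖z‖ = 1 := by
    intro z hz hz1 hz2
    have h1 : ‖z‖ ≤ 1 := hle z hz hz1
    have hzinv : aeval z⁻¹ p = 0 := hinv_root z hz
    have hzinv1 : z⁻¹ ≠ (α:ℂ) := by
      intro h; apply hz2; rw [← h, inv_inv]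
    have h2 : ‖z⁻¹‖ ≤ 1 := hle _ hzinv hzinv1
    rw [norm_inv] at h2
    have hz0 : ‖z‖ ≠ 0 := norm_ne_zero_iff.mpr (hne0 z hz)
    have hzpos : 0 < ‖z‖ := (norm_pos_iff.mpr (hne0 z hz))
    have := inv_mul_cancel₀ hz0
    nlinarith
  have hconjinv : ∀ z : ℂ, ‖z‖ = 1 → (starRingEnd ℂ) z = z⁻¹ := by
    intro z h
    have h2 : (starRingEnd ℂ) z * z = 1 := by
      rw [mul_comm, Complex.mul_conj]
      rw [Complex.normSq_eq_norm_sq, h]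
      norm_num
    exact eq_inv_of_mul_eq_one_left h2
  have him : ∀ z : ℂ, aeval z p = 0 → ‖z‖ = 1 → z.im ≠ 0 := by
    intro z hz habs him0
    have hre : z = ((z.re : ℝ) : ℂ) := Complex.ext rfl him0
    rw [hre, Complex.norm_real, Real.norm_eq_abs] at habs
    rcases abs_eq (le_of_lt one_pos) |>.1 habs with h | h
    · exact hratroot 1 (by rw [Rat.cast_one, ← (by rw [hre, h]; norm_num : z = (1:ℂ))]; exact hz)
    · refine hratroot (-1) ?_
      rw [show (((-1:ℚ)):ℂ) = (-1:ℂ) by norm_num,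
        ← (by rw [hre, h]; norm_num : z = (-1:ℂ))]
      exact hz
  -- coefficients
  set c : Fin s → ℚ := fun j => k ⟨2*j.1, by have := j.isLt; omega⟩ -
      k ⟨2*j.1+1, by have := j.isLt; omega⟩ with hcdef
  set e : Fin s → ℚ := fun j => if 1 ≤ j.1 then c j else 0 with hedef
  -- γ is real
  have hγim : γ.im = 0 := hγ.2 γ (minpoly.aeval ℚ γ)
  have hγconj : (starRingEnd ℂ) γ = γ := Complex.conj_eq_iff_im.mpr hγim
  -- identity (I)
  have hI : ∑ j : Fin s, ((e j : ℂ)) *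
      (a ⟨2*j.1, by have := j.isLt; omega⟩ - a ⟨2*j.1+1, by have := j.isLt; omega⟩) = 0 := by
    have h2 : ∑ i, (k i:ℂ) * (starRingEnd ℂ) (a i) = γ := by
      have h3 := congrArg (starRingEnd ℂ) hrel
      rw [map_sum, hγconj] at h3
      simpa [map_mul] using h3
    have h3 : ∑ i, ((k i:ℂ) * a i - (k i:ℂ) * (starRingEnd ℂ) (a i)) = 0 := by
      rw [Finset.sum_sub_distrib, hrel, h2, sub_self]
    rw [sum_pair_split (fun i => (k i:ℂ) * a i - (k i:ℂ) * (starRingEnd ℂ) (a i))] at h3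
    rw [← h3]
    refine Finset.sum_congr rfl fun j _ => ?_
    by_cases hj : 1 ≤ j.1
    · have hcj := hconj j hj
      simp only [hedef, if_pos hj]
      rw [hcj, Complex.conj_conj]
      simp only [hcdef]
      push_cast
      ring
    · have hj0 : j.1 = 0 := by omega
      have e1 : (⟨2*j.1, by have := j.isLt; omega⟩ : Fin (2*s)) = ⟨0, by omega⟩ :=
        Fin.ext (show 2*j.1 = 0 by omega)
      have e2 : (⟨2*j.1+1, by have := j.isLt; omega⟩ : Fin (2*s)) = ⟨1, by omega⟩ :=
        Fin.ext (show 2*j.1+1 = 1 by omega)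
      simp only [hedef, if_neg hj]
      rw [e1, e2, h0, h1, map_inv₀, Complex.conj_ofReal]
      push_cast
      ring
  -- the splitting field
  set L : IntermediateField ℚ ℂ := IntermediateField.adjoin ℚ (p.rootSet ℂ) with hL
  have hmemL : ∀ i, a i ∈ L := fun i => IntermediateField.subset_adjoin ℚ _ (hmemroot i)
  have hratmemL : ∀ q : ℚ, ((q:ℂ)) ∈ L := fun q => by
    have h := L.algebraMap_mem q
    rwa [eq_ratCast (algebraMap ℚ ℂ) q] at h
  have hγmem : γ ∈ L := by
    rw [← hrel]
    exact sum_mem (fun i _ => mul_mem (hratmemL (k i)) (hmemL i))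
  -- embeddings moving a chosen root to a chosen root
  have key : ∀ (i₀ : Fin (2*s)) (z : ℂ), aeval z p = 0 →
      ∃ τ : L →ₐ[ℚ] ℂ, τ ⟨a i₀, hmemL i₀⟩ = z := by
    intro i₀ z hz
    have hKint : ∀ x ∈ p.rootSet ℂ, IsIntegral ℚ x ∧ ((minpoly ℚ x).map (algebraMap ℚ ℂ)).Splits := by
      intro x hx
      have hxr : aeval x p = 0 := (mem_rootSet.mp hx).2
      have hxint : IsIntegral ℚ x := ⟨p, hpmonic, by rwa [← aeval_def]⟩
      exact ⟨hxint, IsAlgClosed.splits _⟩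
    have hy : aeval z (minpoly ℚ (a i₀)) = 0 := by rw [hmin _ (hroots i₀)]; exact hz
    exact IntermediateField.exists_algHom_adjoin_of_splits_of_aeval hKint
      (IntermediateField.subset_adjoin ℚ _ (hmemroot i₀)) hy
  -- transport of algebraic relations through τ
  have htrans : ∀ (τ : L →ₐ[ℚ] ℂ) (x : ℂ) (hx : x ∈ L) (q : ℚ[X]),
      aeval x q = 0 → aeval (τ ⟨x, hx⟩) q = 0 := by
    intro τ x hx q hq
    have h2 := aeval_algebraMap_apply ℂ (⟨x, hx⟩ : L) q
    have h2' : algebraMap (↥L) ℂ (aeval (⟨x, hx⟩ : L) q) = 0 := by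
      rw [← h2]; exact hq
    have h1' : aeval (⟨x, hx⟩ : L) q = 0 := by
      apply (algebraMap (↥L) ℂ).injective
      rw [h2', map_zero]
    have h3 := aeval_algHom_apply τ (⟨x, hx⟩ : L) q
    rw [h1', map_zero] at h3
    exact h3
  -- injectivity through τ
  have hτinj : ∀ (τ : L →ₐ[ℚ] ℂ) (i i' : Fin (2*s)),
      τ ⟨a i, hmemL i⟩ = τ ⟨a i', hmemL i'⟩ → i = i' := by
    intro τ i i' h
    exact hinj (congrArg Subtype.val (τ.toRingHom.injective h))
  -- image of the linear relation
  have hrelL : ∀ τ : L →ₐ[ℚ] ℂ, ∑ i, (k i:ℂ) * (τ ⟨a i, hmemL i⟩) = τ ⟨γ, hγmem⟩ := by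
    intro τ
    have hLrel : (⟨γ, hγmem⟩ : L) = ∑ i, (algebraMap ℚ L (k i)) * ⟨a i, hmemL i⟩ := by
      apply (algebraMap (↥L) ℂ).injective
      rw [map_sum]
      simp only [map_mul, ← IsScalarTower.algebraMap_apply ℚ L ℂ, eq_ratCast]
      exact hrel.symm
    have h4 := congrArg τ hLrel
    rw [map_sum] at h4
    simp only [map_mul, AlgHom.commutes, eq_ratCast, map_ratCast] at h4
    exact h4.symm
  -- image of identity (I)
  have hIL : ∀ τ : L →ₐ[ℚ] ℂ, ∑ j : Fin s, ((e j : ℂ)) *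
      ((τ ⟨a ⟨2*j.1, by have := j.isLt; omega⟩, hmemL _⟩) -
       (τ ⟨a ⟨2*j.1+1, by have := j.isLt; omega⟩, hmemL _⟩)) = 0 := by
    intro τ
    have hLI : (0 : L) = ∑ j : Fin s, (algebraMap ℚ L (e j)) *
        (⟨a ⟨2*j.1, by have := j.isLt; omega⟩, hmemL _⟩ -
         ⟨a ⟨2*j.1+1, by have := j.isLt; omega⟩, hmemL _⟩) := by
      apply (algebraMap (↥L) ℂ).injective
      rw [map_sum, map_zero]
      simp only [map_mul, map_sub, ← IsScalarTower.algebraMap_apply ℚ L ℂ, eq_ratCast]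
      exact hI.symm
    have h4 := congrArg τ hLI
    rw [map_sum, map_zero] at h4
    simp only [map_mul, map_sub, AlgHom.commutes, eq_ratCast, map_ratCast] at h4
    exact h4.symm
  -- pairs are preserved
  have hbpairgen : ∀ (τ : L →ₐ[ℚ] ℂ) (j : Fin s),
      τ ⟨a ⟨2*j.1+1, by have := j.isLt; omega⟩, hmemL _⟩ =
      (τ ⟨a ⟨2*j.1, by have := j.isLt; omega⟩, hmemL _⟩)⁻¹ := by
    intro τ j
    have h1' : a ⟨2*j.1+1, by have := j.isLt; omega⟩ * a ⟨2*j.1, by have := j.isLt; omega⟩ = 1 := by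
      rw [hpair j]
      exact inv_mul_cancel₀ (hne0 _ (hroots _))
    have h2 : (⟨a ⟨2*j.1+1, by have := j.isLt; omega⟩, hmemL _⟩ : L) *
        ⟨a ⟨2*j.1, by have := j.isLt; omega⟩, hmemL _⟩ = 1 := Subtype.ext h1'
    have h3 := congrArg τ h2
    rw [map_mul, map_one] at h3
    exact eq_inv_of_mul_eq_one_left h3
  -- Step 1: c j = 0 for j ≥ 1
  have hc1 : ∀ j₀ : Fin s, 1 ≤ j₀.1 → c j₀ = 0 := by
    intro j₀ hj₀
    obtain ⟨τ, hτ⟩ := key ⟨2*j₀.1, by have := j₀.isLt; omega⟩ (α:ℂ) hαroot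
    have hb2j0' : τ ⟨a ⟨2*j₀.1+1, by have := j₀.isLt; omega⟩, hmemL _⟩ = ((α:ℂ))⁻¹ := by
      rw [hbpairgen τ j₀, hτ]
    have hterm : ∀ j ∈ Finset.univ (α := Fin s), j ≠ j₀ →
        ((e j:ℂ) * ((τ ⟨a ⟨2*j.1, by have := j.isLt; omega⟩, hmemL _⟩) -
         (τ ⟨a ⟨2*j.1+1, by have := j.isLt; omega⟩, hmemL _⟩))).re = 0 := by
      intro j _ hj
      by_cases hj1 : 1 ≤ j.1
      · have hne1 : τ ⟨a ⟨2*j.1, by have := j.isLt; omega⟩, hmemL _⟩ ≠ (α:ℂ) := by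
          rw [← hτ]
          intro h
          have h' := hτinj τ _ _ h
          have h'' : 2*j.1 = 2*j₀.1 := congrArg Fin.val h'
          exact hj (Fin.ext (by omega))
        have hne2 : τ ⟨a ⟨2*j.1, by have := j.isLt; omega⟩, hmemL _⟩ ≠ ((α:ℂ))⁻¹ := by
          rw [← hb2j0']
          intro h
          have h' := hτinj τ _ _ h
          have h'' : 2*j.1 = 2*j₀.1+1 := congrArg Fin.val h'
          omega
        have habsb : ‖(τ ⟨a ⟨2*j.1, by have := j.isLt; omega⟩, hmemL _⟩)‖ = 1 :=
          habs1 _ (htrans τ _ _ p (hroots _)) hne1 hne2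
        have hcb : τ ⟨a ⟨2*j.1+1, by have := j.isLt; omega⟩, hmemL _⟩ =
            (starRingEnd ℂ) (τ ⟨a ⟨2*j.1, by have := j.isLt; omega⟩, hmemL _⟩) := by
          rw [hbpairgen τ j, ← hconjinv _ habsb]
        rw [hcb]
        exact re_ratCast_mul_sub_conj _ _
      · have he0 : e j = 0 := if_neg hj1
        rw [he0]
        norm_num
    have hIb := hIL τ
    have hre := congrArg Complex.re hIb
    rw [Complex.re_sum,
      Finset.sum_eq_single j₀ hterm (fun h => absurd (Finset.mem_univ j₀) h)] at hre
    rw [hτ, hb2j0'] at hre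
    have hre2 : (e j₀ : ℝ) * (α - α⁻¹) = 0 := by
      rw [← Complex.ofReal_inv] at hre
      simpa [Complex.mul_re, Complex.ofReal_re, Complex.ofReal_im] using hre
    have hα2 : α⁻¹ < 1 := by
      rw [inv_lt_one_iff₀]
      right; exact hα1
    have hαne : α - α⁻¹ ≠ 0 := by nlinarith
    have he0 : (e j₀ : ℝ) = 0 := by
      rcases mul_eq_zero.mp hre2 with h | h
      · exact h
      · exact absurd h hαne
    have he0' : e j₀ = 0 := by exact_mod_cast he0
    simpa only [hedef, if_pos hj₀] using he0'
  -- Step 2: the pair 0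
  have hc0 : ∀ j₀ : Fin s, j₀.1 = 0 → c j₀ = 0 := by
    intro j₀ hj₀
    obtain ⟨τ, hτ⟩ := key ⟨0, by omega⟩ z₀ hz₀root
    have hγ' : (τ ⟨γ, hγmem⟩).im = 0 :=
      hγ.2 _ (htrans τ γ hγmem (minpoly ℚ γ) (minpoly.aeval ℚ γ))
    have him0 := congrArg Complex.im (hrelL τ)
    rw [Complex.im_sum, hγ',
      sum_pair_split (fun i => ((k i:ℂ) * (τ ⟨a i, hmemL i⟩)).im)] at him0
    have hmulim : ∀ (q : ℚ) (z : ℂ), ((q:ℂ) * z).im = (q:ℝ) * z.im := by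
      intro q z
      simp [Complex.mul_im]
    have hterm : ∀ j ∈ Finset.univ (α := Fin s), j ≠ j₀ →
        (((k ⟨2*j.1, by have := j.isLt; omega⟩:ℂ) *
            (τ ⟨a ⟨2*j.1, by have := j.isLt; omega⟩, hmemL _⟩)).im +
         ((k ⟨2*j.1+1, by have := j.isLt; omega⟩:ℂ) *
            (τ ⟨a ⟨2*j.1+1, by have := j.isLt; omega⟩, hmemL _⟩)).im) = 0 := by
      intro j _ hj
      have hj1 : 1 ≤ j.1 := by
        rcases Nat.eq_zero_or_pos j.1 with h | h
        · exact absurd (Fin.ext (by omega) : j = j₀) hj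
        · exact h
      have hkj : k ⟨2*j.1+1, by have := j.isLt; omega⟩ = k ⟨2*j.1, by have := j.isLt; omega⟩ := by
        have h := hc1 j hj1
        simp only [hcdef] at h
        linarith
      have hwpair : τ ⟨a ⟨2*j.1+1, by have := j.isLt; omega⟩, hmemL _⟩ =
          (τ ⟨a ⟨2*j.1, by have := j.isLt; omega⟩, hmemL _⟩)⁻¹ := hbpairgen τ j
      have him_w : (τ ⟨a ⟨2*j.1, by have := j.isLt; omega⟩, hmemL _⟩).im +
          ((τ ⟨a ⟨2*j.1, by have := j.isLt; omega⟩, hmemL _⟩)⁻¹).im = 0 := by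
        rcases eq_or_ne (τ ⟨a ⟨2*j.1, by have := j.isLt; omega⟩, hmemL _⟩) ((α:ℂ)) with h | h
        · rw [h, ← Complex.ofReal_inv]
          simp
        · rcases eq_or_ne (τ ⟨a ⟨2*j.1, by have := j.isLt; omega⟩, hmemL _⟩) (((α:ℂ))⁻¹) with h2 | h2
          · rw [h2, inv_inv, ← Complex.ofReal_inv]
            simp
          · have habsw : ‖(τ ⟨a ⟨2*j.1, by have := j.isLt; omega⟩, hmemL _⟩)‖ = 1 :=
              habs1 _ (htrans τ _ _ p (hroots _)) h h2
            rw [← hconjinv _ habsw]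
            simp
      rw [hwpair, hkj, hmulim, hmulim, ← mul_add, him_w, mul_zero]
    rw [Finset.sum_eq_single j₀ hterm (fun h => absurd (Finset.mem_univ j₀) h)] at him0
    have hi0 : (⟨2*j₀.1, by have := j₀.isLt; omega⟩ : Fin (2*s)) = ⟨0, by omega⟩ :=
      Fin.ext (show 2*j₀.1 = 0 by omega)
    have hi1 : (⟨2*j₀.1+1, by have := j₀.isLt; omega⟩ : Fin (2*s)) = ⟨1, by omega⟩ :=
      Fin.ext (show 2*j₀.1+1 = 1 by omega)
    rw [hi0, hi1] at him0
    have hb0 : τ ⟨a ⟨0, by omega⟩, hmemL _⟩ = z₀ := hτ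
    have hb1 : τ ⟨a ⟨1, by omega⟩, hmemL _⟩ = z₀⁻¹ := by
      have h : τ ⟨a ⟨1, by omega⟩, hmemL _⟩ = (τ ⟨a ⟨0, by omega⟩, hmemL _⟩)⁻¹ :=
        hbpairgen τ ⟨0, by omega⟩
      rw [h, hb0]
    rw [hb0, hb1, ← hconjinv z₀ hz₀abs, hmulim, hmulim] at him0
    simp only [Complex.conj_im] at him0
    have himz₀ : z₀.im ≠ 0 := him z₀ hz₀root hz₀abs
    have hmul0 : ((k ⟨0, by omega⟩ : ℝ) - (k ⟨1, by omega⟩ : ℝ)) * z₀.im = 0 := by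
      linarith
    have hk01 : (k ⟨0, by omega⟩ : ℝ) = (k ⟨1, by omega⟩ : ℝ) := by
      rcases mul_eq_zero.mp hmul0 with h | h
      · linarith
      · exact absurd h himz₀
    have hk01' : k ⟨0, by omega⟩ = k ⟨1, by omega⟩ := by exact_mod_cast hk01
    simp only [hcdef]
    rw [hi0, hi1, hk01', sub_self]
  -- conclusion
  intro j
  have hcj : c j = 0 := by
    rcases Nat.eq_zero_or_pos j.1 with h | h
    · exact hc0 j h
    · exact hc1 j h
  simp only [hcdef] at hcj
  linarith
end

section
/- Let h ∈ ℤ[x] be a monic polynomial of degree k ≥ 2 with k−1 roots in the interval (-2, 1/4) and one root in (-6, -2). Then f(x) := (-1)^k x^{2k} h((x + 1/x)(1 − x − 1/x)) is a monic reciprocal polynomial of degree 4k with integer coefficients. -/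
open Polynomial Finset

/-- if `h ∈ ℤ[x]` is monic of degree `k ≥ 2` with `k-1` roots in
`(-2, 1/4)` and one root in `(-6, -2)`, then
`f(x) := (-1)^k x^{2k} h((x+1/x)(1-x-1/x))` is a monic reciprocal integer
polynomial of degree `4k`. -/
theorem salem_construction_polynomial (h : ℤ[X]) (k : ℕ) (hk : 2 ≤ k)
    (hmonic : h.Monic) (hdeg : h.natDegree = k)
    (r : Fin k → ℝ) (hinj : Function.Injective r)
    (hroots : ∀ i, aeval (r i) h = 0)
    (hr0 : r ⟨0, by omega⟩ ∈ Set.Ioo (-6 : ℝ) (-2))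
    (hri : ∀ i : Fin k, i.1 ≠ 0 → r i ∈ Set.Ioo (-2 : ℝ) (1 / 4)) :
    ∃ f : ℤ[X],
      (∀ x : ℝ, x ≠ 0 → aeval x f =
        (-1 : ℝ) ^ k * x ^ (2 * k) *
          aeval ((x + 1 / x) * (1 - x - 1 / x)) h) ∧
      f.Monic ∧ f.natDegree = 4 * k ∧ f.reverse = f := by
  set g : ℤ[X] := h.comp (X - X ^ 2) with hg
  have hq2 : (X - X ^ 2 : ℤ[X]).natDegree = 2 := by compute_degree!
  have hq2lc : (X - X ^ 2 : ℤ[X]).leadingCoeff = -1 := by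
    rw [leadingCoeff, hq2]; simp [coeff_X]
  have hgdeg : g.natDegree = 2 * k := by
    rw [hg, natDegree_comp, hdeg, hq2]; ring
  have hglc : g.leadingCoeff = (-1) ^ k := by
    rw [hg, leadingCoeff_comp (by rw [hq2]; norm_num), hmonic.leadingCoeff, one_mul,
      hq2lc, hdeg]
  have hgcoeff : g.coeff (2 * k) = (-1) ^ k := by
    rw [← hgdeg, ← leadingCoeff, hglc]
  set S : ℤ[X] := ∑ i ∈ range (2 * k + 1), C (g.coeff i) * ((X ^ 2 + 1) ^ i * X ^ (2 * k - i))
    with hS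
  set f : ℤ[X] := C ((-1 : ℤ) ^ k) * S with hf
  have hterm : ∀ i, i ≤ 2 * k → (C (g.coeff i) * ((X ^ 2 + 1) ^ i * X ^ (2 * k - i)) : ℤ[X]).natDegree
      ≤ 2 * k + i := by
    intro i hile
    refine natDegree_mul_le.trans ?_
    rw [natDegree_C, zero_add]
    refine natDegree_mul_le.trans ?_
    have h1 : ((X ^ 2 + 1 : ℤ[X]) ^ i).natDegree ≤ 2 * i := by
      refine natDegree_pow_le.trans ?_
      have : (X ^ 2 + 1 : ℤ[X]).natDegree ≤ 2 := by compute_degree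
      nlinarith
    have h2 : ((X : ℤ[X]) ^ (2 * k - i)).natDegree ≤ 2 * k - i := natDegree_X_pow_le _
    omega
  have hSdeg : S.natDegree ≤ 4 * k := by
    refine natDegree_sum_le_of_forall_le _ _ fun i hi => (hterm i (by simp only [mem_range] at hi; omega)).trans ?_
    simp only [mem_range] at hi; omega
  have hfdeg : f.natDegree ≤ 4 * k := by
    refine natDegree_mul_le.trans ?_
    rw [natDegree_C, zero_add]; exact hSdeg
  have hX21m : (X ^ 2 + 1 : ℤ[X]).Monic := by
    have := monic_X_pow_add_C (R := ℤ) (1 : ℤ) (n := 2) two_ne_zero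
    simpa using this
  have hX21 : ((X ^ 2 + 1 : ℤ[X]) ^ (2 * k)).Monic := hX21m.pow _
  have hX21deg : ((X ^ 2 + 1 : ℤ[X]) ^ (2 * k)).natDegree = 4 * k := by
    rw [natDegree_pow]
    have : (X ^ 2 + 1 : ℤ[X]).natDegree = 2 := by compute_degree!
    rw [this]; ring
  have hScoeff : S.coeff (4 * k) = (-1) ^ k := by
    rw [hS, finset_sum_coeff]
    rw [Finset.sum_eq_single (2 * k)]
    · rw [Nat.sub_self, pow_zero, mul_one, coeff_C_mul, ← hX21deg,
        hX21.coeff_natDegree, mul_one, hgcoeff]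
    · intro i hi hne
      apply coeff_eq_zero_of_natDegree_lt
      simp only [mem_range] at hi
      refine lt_of_le_of_lt (hterm i (by omega)) ?_
      omega
    · intro hni; exact absurd (by simp) hni
  have hfcoeff : f.coeff (4 * k) = 1 := by
    rw [hf, coeff_C_mul, hScoeff, ← pow_add]
    simp [pow_mul]
  have hfmonic : f.Monic := monic_of_natDegree_le_of_coeff_eq_one _ hfdeg hfcoeff
  have hfdeg' : f.natDegree = 4 * k := by
    refine le_antisymm hfdeg ?_
    by_contra hlt
    push_neg at hlt
    rw [coeff_eq_zero_of_natDegree_lt hlt] at hfcoeff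
    exact one_ne_zero hfcoeff.symm
  -- evaluation identity
  have heval : ∀ x : ℝ, x ≠ 0 → aeval x f =
      (-1 : ℝ) ^ k * x ^ (2 * k) * aeval ((x + 1 / x) * (1 - x - 1 / x)) h := by
    intro x hx
    have hx1 : x * (x + 1 / x) = x ^ 2 + 1 := by field_simp
    have key : ∀ i ∈ range (2 * k + 1),
        (g.coeff i : ℝ) * ((x ^ 2 + 1) ^ i * x ^ (2 * k - i))
          = x ^ (2 * k) * ((g.coeff i : ℝ) * (x + 1 / x) ^ i) := by
      intro i hi
      simp only [mem_range] at hi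
      have hik : i ≤ 2 * k := by omega
      rw [← hx1, mul_pow]
      rw [show x ^ (2 * k) = x ^ i * x ^ (2 * k - i) by rw [← pow_add]; congr 1; omega]
      ring
    have hsum : aeval x f = (-1 : ℝ) ^ k *
        ∑ i ∈ range (2 * k + 1), (g.coeff i : ℝ) * ((x ^ 2 + 1) ^ i * x ^ (2 * k - i)) := by
      rw [hf, hS]
      simp [Finset.mul_sum]
    rw [hsum, Finset.sum_congr rfl key, ← Finset.mul_sum]
    have haev : aeval (x + 1 / x) g =
        ∑ i ∈ range (2 * k + 1), (g.coeff i : ℝ) * (x + 1 / x) ^ i := by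
      rw [← hgdeg] at *
      rw [aeval_eq_sum_range]
      simp [zsmul_eq_mul]
    have hcompeval : aeval (x + 1 / x) g =
        aeval ((x + 1 / x) * (1 - x - 1 / x)) h := by
      rw [hg, aeval_comp]
      congr 1
      simp only [map_sub, map_pow, aeval_X]
      ring
    rw [← haev, hcompeval]
    ring
  refine ⟨f, heval, hfmonic, hfdeg', ?_⟩
  -- reciprocal
  have hrev : ∀ y : ℝ, y ≠ 0 → aeval y f.reverse = aeval y f := by
    intro y hy
    have hy' : y⁻¹ ≠ 0 := inv_ne_zero hy
    haveI : Invertible (y⁻¹) := invertibleOfNonzero hy'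
    have := eval₂_reverse_mul_pow (algebraMap ℤ ℝ) y⁻¹ f
    rw [invOf_eq_inv, inv_inv] at this
    have h1 : aeval y f.reverse * (y⁻¹) ^ f.natDegree = aeval y⁻¹ f := by
      simpa [aeval_def] using this
    have h2 := heval y hy
    have h3 := heval y⁻¹ hy'
    have harg : ((y⁻¹ + 1 / y⁻¹) * (1 - y⁻¹ - 1 / y⁻¹)) =
        ((y + 1 / y) * (1 - y - 1 / y)) := by
      rw [one_div, inv_inv, one_div]; ring
    rw [h3, harg] at h1
    have hyk : (y⁻¹ : ℝ) ^ f.natDegree ≠ 0 := pow_ne_zero _ hy'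
    rw [hfdeg'] at h1
    have hinv : (y⁻¹ : ℝ) ^ (4 * k) * y ^ (4 * k) = 1 := by
      rw [← mul_pow, inv_mul_cancel₀ hy, one_pow]
    have hL : aeval y f.reverse =
        ((-1 : ℝ) ^ k * (y⁻¹) ^ (2 * k) * aeval ((y + 1 / y) * (1 - y - 1 / y)) h)
          * y ^ (4 * k) := by
      calc aeval y f.reverse
          = aeval y f.reverse * ((y⁻¹ : ℝ) ^ (4 * k) * y ^ (4 * k)) := by rw [hinv, mul_one]
        _ = (aeval y f.reverse * (y⁻¹) ^ (4 * k)) * y ^ (4 * k) := by ring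
        _ = _ := by rw [h1]
    have hyy : ((y⁻¹ : ℝ)) ^ (2 * k) * y ^ (4 * k) = y ^ (2 * k) := by
      rw [show 4 * k = 2 * k + 2 * k by ring, pow_add, ← mul_assoc, ← mul_pow,
        inv_mul_cancel₀ hy, one_pow, one_mul]
    rw [hL, h2]
    calc ((-1 : ℝ) ^ k * (y⁻¹) ^ (2 * k) * aeval ((y + 1 / y) * (1 - y - 1 / y)) h)
          * y ^ (4 * k)
        = (-1 : ℝ) ^ k * ((y⁻¹) ^ (2 * k) * y ^ (4 * k)) *
            aeval ((y + 1 / y) * (1 - y - 1 / y)) h := by ring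
      _ = _ := by rw [hyy]
  have hmapinj : Function.Injective (Polynomial.map (Int.castRingHom ℝ)) :=
    Polynomial.map_injective _ Int.cast_injective
  apply hmapinj
  by_contra hne
  have hsub : f.reverse.map (Int.castRingHom ℝ) - f.map (Int.castRingHom ℝ) ≠ 0 :=
    sub_ne_zero_of_ne hne
  have hroot : ∀ y : ℝ, y ≠ 0 →
      IsRoot (f.reverse.map (Int.castRingHom ℝ) - f.map (Int.castRingHom ℝ)) y := by
    intro y hy
    have := hrev y hy
    simp only [IsRoot, eval_sub]
    rw [aeval_def, ← eval_map] at this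
    rw [aeval_def, ← eval_map] at this
    simp only [algebraMap_int_eq] at this
    rw [this, sub_self]
  have hinf : Set.Infinite {x : ℝ |
      IsRoot (f.reverse.map (Int.castRingHom ℝ) - f.map (Int.castRingHom ℝ)) x} := by
    refine Set.Infinite.mono ?_ (Set.Ioi_infinite (0 : ℝ))
    intro x hx
    exact hroot x (ne_of_gt hx)
  exact hsub (eq_zero_of_infinite_isRoot _ hinf)
end

section
/- Let f ∈ ℤ[x] with f*(x) ≠ ±f(x), where f*(x) = x^{deg f} f(1/x), let ε ∈ {−1, 1}, and set g_n(x) = x^n f(x) + ε f*(x). If a root of unity ζ satisfies g_n(ζ) = 0 for some n ∈ ℕ, then ζ is a root of at least one of the polynomials f(x²)f*(x)² + ε f(x)² f*(x²), f(x)² f*(−x²) + f(−x²) f*(x)², f(x)² f*(−x²) − f(−x²) f*(x)², f(x) f*(−x) + f(−x) f*(x), or f(x) f*(−x) − f(−x) f*(x). -/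
open Polynomial

/-- If `ζ` and `η` are primitive `d`-th roots of unity in `ℂ` and `ζ` is a root of the
integer polynomial `h`, then so is `η`. -/
lemma aeval_eq_zero_of_conj (h : ℤ[X]) (ζ η : ℂ) (d : ℕ) (hd : 0 < d)
    (hζ : IsPrimitiveRoot ζ d) (hη : IsPrimitiveRoot η d) (h0 : aeval ζ h = 0) :
    aeval η h = 0 := by
  have hdvd : minpoly ℚ ζ ∣ h.map (algebraMap ℤ ℚ) := by
    apply minpoly.dvd
    rw [aeval_map_algebraMap]
    exact h0
  obtain ⟨q, hq⟩ := hdvd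
  have hηmin : aeval η (minpoly ℚ ζ) = 0 := by
    rw [← cyclotomic_eq_minpoly_rat hζ hd, aeval_def, eval₂_eq_eval_map, map_cyclotomic]
    exact hη.isRoot_cyclotomic hd
  have : aeval η (h.map (algebraMap ℤ ℚ)) = 0 := by
    rw [hq, map_mul, hηmin, zero_mul]
  rwa [aeval_map_algebraMap] at this

/-- Lemma, first part: if `f ∈ ℤ[x]` with `f* ≠ ±f` (where
`f* = reverse f = x^{deg f} f(1/x)`), `ε = ±1`, and a root of unity `ζ` is a root of
`g_n(x) = x^n f(x) + ε f*(x)` for some `n`, then `ζ` is a root of one of the listed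
auxiliary polynomials. -/
theorem cyclotomic_factor_candidates (f : ℤ[X]) (hf1 : f.reverse ≠ f)
    (hf2 : f.reverse ≠ -f) (ε : ℤ) (hε : ε = 1 ∨ ε = -1)
    (ζ : ℂ) (hζ : ∃ m : ℕ, 0 < m ∧ ζ ^ m = 1)
    (n : ℕ) (hroot : ζ ^ n * aeval ζ f + (ε : ℂ) * aeval ζ f.reverse = 0) :
    aeval (ζ ^ 2) f * (aeval ζ f.reverse) ^ 2 +
        (ε : ℂ) * (aeval ζ f) ^ 2 * aeval (ζ ^ 2) f.reverse = 0 ∨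
    (aeval ζ f) ^ 2 * aeval (-ζ ^ 2) f.reverse +
        aeval (-ζ ^ 2) f * (aeval ζ f.reverse) ^ 2 = 0 ∨
    (aeval ζ f) ^ 2 * aeval (-ζ ^ 2) f.reverse -
        aeval (-ζ ^ 2) f * (aeval ζ f.reverse) ^ 2 = 0 ∨
    aeval ζ f * aeval (-ζ) f.reverse + aeval (-ζ) f * aeval ζ f.reverse = 0 ∨
    aeval ζ f * aeval (-ζ) f.reverse - aeval (-ζ) f * aeval ζ f.reverse = 0 := by
  obtain ⟨m, hm, hζm⟩ := hζ
  have hζ0 : ζ ≠ 0 := by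
    intro h
    rw [h, zero_pow hm.ne'] at hζm
    exact zero_ne_one hζm
  have hfo : IsOfFinOrder ζ := isOfFinOrder_iff_pow_eq_one.mpr ⟨m, hm, hζm⟩
  set d := orderOf ζ with hdd
  have hd : 0 < d := hfo.orderOf_pos
  have hprim : IsPrimitiveRoot ζ d := IsPrimitiveRoot.orderOf ζ
  have hε2 : (ε : ℂ) ^ 2 = 1 := by rcases hε with h | h <;> simp [h]
  -- the polynomial `g_n`
  set h : ℤ[X] := X ^ n * f + C ε * f.reverse with hh
  have haeval : ∀ η : ℂ, aeval η h = η ^ n * aeval η f + (ε : ℂ) * aeval η f.reverse := by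
    intro η
    simp [hh]
  have h0 : aeval ζ h = 0 := by rw [haeval]; exact hroot
  set A := aeval ζ f with hA
  set B := aeval ζ f.reverse with hB
  -- case split on `d mod 4`
  rcases Nat.even_or_odd d with hde | hdo
  · -- d even : write d = 2 * c
    obtain ⟨c, hc⟩ := hde
    have hc' : d = 2 * c := by omega
    have hc0 : 0 < c := by omega
    have hζc2 : (ζ ^ c) ^ 2 = 1 := by
      rw [← pow_mul, mul_comm, ← hc']
      exact pow_orderOf_eq_one ζ
    have hζc1 : ζ ^ c ≠ 1 := by
      intro hone
      have := orderOf_dvd_of_pow_eq_one hone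
      rw [← hdd] at this
      have := Nat.le_of_dvd hc0 this
      omega
    have hζcneg : ζ ^ c = -1 := by
      have : (ζ ^ c - 1) * (ζ ^ c + 1) = 0 := by linear_combination hζc2
      rcases mul_eq_zero.mp this with h' | h'
      · exact absurd (by linear_combination h') hζc1
      · linear_combination h'
    rcases Nat.even_or_odd c with hce | hco
    · -- 4 ∣ d : use η = ζ^(c+1) = -ζ
      have hcop : (c + 1).Coprime d := by
        rw [hc']
        refine Nat.Coprime.mul_right ?_
          (Nat.coprime_self_add_left.mpr (Nat.coprime_one_left c))
        rw [Nat.coprime_two_right]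
        exact Even.add_one hce
      have hprim' : IsPrimitiveRoot (ζ ^ (c + 1)) d := hprim.pow_of_coprime _ hcop
      have hval : ζ ^ (c + 1) = -ζ := by rw [pow_succ, hζcneg]; ring
      rw [hval] at hprim'
      have h1 : aeval (-ζ) h = 0 :=
        aeval_eq_zero_of_conj h ζ (-ζ) d hd hprim hprim' h0
      rw [haeval] at h1
      set A' := aeval (-ζ) f with hA'
      set B' := aeval (-ζ) f.reverse with hB'
      have hzn : (ζ : ℂ) ^ n ≠ 0 := pow_ne_zero _ hζ0
      rcases Nat.even_or_odd n with hne | hno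
      · -- n even : (-ζ)^n = ζ^n ; pick the minus disjunct
        right; right; right; right
        have hpow : (-ζ) ^ n = ζ ^ n := hne.neg_pow ζ
        rw [hpow] at h1
        have key : ζ ^ n * (A * B' - A' * B) = 0 := by
          linear_combination B' * hroot - B * h1
        exact (mul_eq_zero.mp key).resolve_left hzn
      · -- n odd : (-ζ)^n = -ζ^n ; pick the plus disjunct
        right; right; right; left
        have hpow : (-ζ) ^ n = -ζ ^ n := hno.neg_pow ζ
        rw [hpow] at h1
        have key : ζ ^ n * (A * B' + A' * B) = 0 := by
          linear_combination B' * hroot - B * h1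
        exact (mul_eq_zero.mp key).resolve_left hzn
    · -- d ≡ 2 mod 4 : use η = ζ^(c+2) = -ζ^2
      have hcop : (c + 2).Coprime d := by
        rw [hc']
        refine Nat.Coprime.mul_right ?_ ?_
        · rw [Nat.coprime_two_right]
          obtain ⟨k, hk⟩ := hco
          exact ⟨k + 1, by omega⟩
        · exact Nat.coprime_self_add_left.mpr (Nat.coprime_two_left.mpr hco)
      have hprim' : IsPrimitiveRoot (ζ ^ (c + 2)) d := hprim.pow_of_coprime _ hcop
      have hval : ζ ^ (c + 2) = -ζ ^ 2 := by rw [pow_add, hζcneg]; ring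
      rw [hval] at hprim'
      have h1 : aeval (-ζ ^ 2) h = 0 :=
        aeval_eq_zero_of_conj h ζ (-ζ ^ 2) d hd hprim hprim' h0
      rw [haeval] at h1
      set A' := aeval (-ζ ^ 2) f with hA'
      set B' := aeval (-ζ ^ 2) f.reverse with hB'
      have hzn : ((ζ : ℂ) ^ n) ^ 2 ≠ 0 := pow_ne_zero _ (pow_ne_zero _ hζ0)
      have hp2 : (-ζ ^ 2) ^ n = (-1) ^ n * (ζ ^ n) ^ 2 := by
        rw [neg_pow, ← pow_mul, mul_comm 2 n, pow_mul]
      rcases Nat.even_or_odd n with hne | hno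
      · have hm1 : ((-1 : ℂ)) ^ n = 1 := hne.neg_one_pow
        rw [hp2, hm1, one_mul] at h1
        rcases hε with hε1 | hε1
        · -- ε = 1, n even : plus disjunct
          right; left
          subst hε1
          push_cast at h1 hroot ⊢
          have key : (ζ ^ n) ^ 2 * (A ^ 2 * B' + A' * B ^ 2) = 0 := by
            linear_combination B ^ 2 * h1 + (ζ ^ n * A - B) * B' * hroot
          exact (mul_eq_zero.mp key).resolve_left hzn
        · -- ε = -1, n even : minus disjunct
          right; right; left
          subst hε1
          push_cast at h1 hroot ⊢
          have key : (ζ ^ n) ^ 2 * (A ^ 2 * B' - A' * B ^ 2) = 0 := by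
            linear_combination (-(B ^ 2)) * h1 + (ζ ^ n * A + B) * B' * hroot
          exact (mul_eq_zero.mp key).resolve_left hzn
      · have hm1 : ((-1 : ℂ)) ^ n = -1 := hno.neg_one_pow
        rw [hp2, hm1, neg_one_mul] at h1
        rcases hε with hε1 | hε1
        · -- ε = 1, n odd : minus disjunct
          right; right; left
          subst hε1
          push_cast at h1 hroot ⊢
          have key : (ζ ^ n) ^ 2 * (A ^ 2 * B' - A' * B ^ 2) = 0 := by
            linear_combination B ^ 2 * h1 + (ζ ^ n * A - B) * B' * hroot
          exact (mul_eq_zero.mp key).resolve_left hzn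
        · -- ε = -1, n odd : plus disjunct
          right; left
          subst hε1
          push_cast at h1 hroot ⊢
          have key : (ζ ^ n) ^ 2 * (A ^ 2 * B' + A' * B ^ 2) = 0 := by
            linear_combination (-(B ^ 2)) * h1 + (ζ ^ n * A + B) * B' * hroot
          exact (mul_eq_zero.mp key).resolve_left hzn
  · -- d odd : use η = ζ^2
    left
    have hcop : (2 : ℕ).Coprime d := Nat.coprime_two_left.mpr hdo
    have hprim' : IsPrimitiveRoot (ζ ^ 2) d := hprim.pow_of_coprime _ hcop
    have h1 : aeval (ζ ^ 2) h = 0 :=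
      aeval_eq_zero_of_conj h ζ (ζ ^ 2) d hd hprim hprim' h0
    rw [haeval] at h1
    set A' := aeval (ζ ^ 2) f with hA'
    set B' := aeval (ζ ^ 2) f.reverse with hB'
    have hzn : ((ζ : ℂ) ^ n) ^ 2 ≠ 0 := pow_ne_zero _ (pow_ne_zero _ hζ0)
    have hp2 : (ζ ^ 2) ^ n = (ζ ^ n) ^ 2 := by rw [← pow_mul, mul_comm 2 n, pow_mul]
    rw [hp2] at h1
    have key : (ζ ^ n) ^ 2 * (A' * B ^ 2 + (ε : ℂ) * A ^ 2 * B') = 0 := by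
      linear_combination B ^ 2 * h1 + (ε : ℂ) * B' * (ζ ^ n * A - (ε : ℂ) * B) * hroot +
        (ε : ℂ) * B ^ 2 * B' * hε2
    exact (mul_eq_zero.mp key).resolve_left hzn
end

section
/- If ζ ∈ ℂ is a root of unity, then at least one of ζ², −ζ², −ζ is an algebraic conjugate of ζ over ℚ. -/
open Polynomial

private lemma bs_aux {ζ ξ : ℂ} {n : ℕ} (hn : 0 < n) (h : IsPrimitiveRoot ζ n)
    (h' : IsPrimitiveRoot ξ n) : aeval ξ (minpoly ℚ ζ) = 0 := by
  rw [← cyclotomic_eq_minpoly_rat h hn, aeval_def, ← eval_map, map_cyclotomic]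
  exact h'.isRoot_cyclotomic hn

/-- Beukers–Smyth: if `ζ` is a root of unity, then at least one of
`ζ²`, `-ζ²`, `-ζ` is an algebraic conjugate of `ζ` over ℚ, i.e. a root of the
minimal polynomial of `ζ`. -/
theorem beukers_smyth_conjugate (ζ : ℂ) (hζ : ∃ m : ℕ, 0 < m ∧ ζ ^ m = 1) :
    aeval (ζ ^ 2) (minpoly ℚ ζ) = 0 ∨
    aeval (-ζ ^ 2) (minpoly ℚ ζ) = 0 ∨
    aeval (-ζ) (minpoly ℚ ζ) = 0 := by
  obtain ⟨m, hm, h1⟩ := hζ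
  have hfin : IsOfFinOrder ζ := isOfFinOrder_iff_pow_eq_one.mpr ⟨m, hm, h1⟩
  set n := orderOf ζ with hn
  have hn0 : 0 < n := hfin.orderOf_pos
  have h : IsPrimitiveRoot ζ n := IsPrimitiveRoot.orderOf ζ
  rcases Nat.even_or_odd n with he | ho
  · -- n even, n = 2*k
    obtain ⟨k, hk⟩ := he
    have hk' : n = 2 * k := by omega
    have hk0 : 0 < k := by omega
    have hkm1 : ζ ^ k = -1 := by
      have hsq : (ζ ^ k) ^ 2 = 1 := by
        rw [← pow_mul, mul_comm, ← hk']; exact h.pow_eq_one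
      have hne : ζ ^ k ≠ 1 := h.pow_ne_one_of_pos_of_lt hk0.ne' (by omega)
      rcases sq_eq_one_iff.mp hsq with h' | h'
      · exact absurd h' hne
      · exact h'
    rcases Nat.even_or_odd k with hke | hko
    · -- 4 ∣ n : -ζ = ζ^(k+1) is primitive
      right; right
      have hcop : Nat.Coprime (k + 1) n := by
        rw [hk']
        refine Nat.Coprime.mul_right ?_ (by rw [Nat.add_comm]; exact (Nat.coprime_add_self_left (m := 1) (n := k)).mpr (Nat.coprime_one_left k))
        rw [Nat.coprime_two_right]
        exact Even.add_one hke
      have hprim : IsPrimitiveRoot (ζ ^ (k + 1)) n := h.pow_of_coprime _ hcop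
      have heq : ζ ^ (k + 1) = -ζ := by rw [pow_succ, hkm1]; ring
      rw [heq] at hprim
      exact bs_aux hn0 h hprim
    · -- n ≡ 2 mod 4 : -ζ² = ζ^(k+2) is primitive
      right; left
      have hcop : Nat.Coprime (k + 2) n := by
        rw [hk']
        refine Nat.Coprime.mul_right ?_ ?_
        · rw [Nat.coprime_two_right]
          rcases hko with ⟨t, ht⟩
          exact ⟨t + 1, by omega⟩
        · have : Nat.Coprime 2 k := by
            rw [Nat.coprime_comm, Nat.coprime_two_right]; exact hko
          simpa [Nat.add_comm] using (Nat.coprime_add_self_left (m := 2) (n := k)).mpr this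
      have hprim : IsPrimitiveRoot (ζ ^ (k + 2)) n := h.pow_of_coprime _ hcop
      have heq : ζ ^ (k + 2) = -ζ ^ 2 := by rw [pow_add, hkm1]; ring
      rw [heq] at hprim
      exact bs_aux hn0 h hprim
  · -- n odd : ζ² primitive
    left
    have hcop : Nat.Coprime 2 n := by
      rw [Nat.coprime_comm, Nat.coprime_two_right]; exact ho
    exact bs_aux hn0 h (h.pow_of_coprime 2 hcop)
end
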